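/- Let A be the para-Zorn matrix algebra over F built from (B, ·, (·|·), k), and for each nonzero λ ∈ F let ρ₁(λ), ρ₂(λ), ρ₃(λ) be the linear maps ρ₁(λ)[[α,x],[y,β]] = [[λα, λx],[λ⁻¹y, λ⁻¹β]], ρ₂(λ)[[α,x],[y,β]] = [[λα, λ⁻¹x],[λy, λ⁻¹β]], ρ₃(λ)[[α,x],[y,β]] = [[λ⁻²α, x],[y, λ²β]]. Then: (i) ρ_j(λ)(XY) = (ρ_{j+1}(λ)X)(ρ_{j+2}(λ)Y) for all X, Y ∈ A and all j = 1, 2, 3 (indices modulo 3); (ii) ρ_j(μ)∘ρ_j(ν) = ρ_j(μν) and ρ_j(1) = Id; (iii) ρ_j(μ)∘ρ_k(ν) = ρ_k(ν)∘ρ_j(μ) for all j, k; (iv) ρ₁(λ)∘ρ₂(λ)∘ρ₃(λ) = Id. -/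

import Mathlib

/-- The product of the para-Zorn matrix algebra (paper Eq. (5.17)): elements
are written `(α, x, y, β)` for the vector matrix `[[α, x],[y, β]]`. -/
def zornMul {F B : Type*} [Field F] [AddCommGroup B] [Module F B]
    (bmul : B →ₗ[F] B →ₗ[F] B) (form : B →ₗ[F] B →ₗ[F] F) (k : F)
    (X Y : F × B × B × F) : F × B × B × F :=
  (X.2.2.2 * Y.2.2.2 + form X.2.2.1 Y.2.1,
   X.1 • Y.2.1 + Y.2.2.2 • X.2.1 + k • bmul X.2.2.1 Y.2.2.1,
   Y.1 • X.2.2.1 + X.2.2.2 • Y.2.2.1 + k • bmul X.2.1 Y.2.1,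
   X.1 * Y.1 + form X.2.1 Y.2.2.1)

/-- The maps `ρ_j(λ)` of Eqs. (5.21); paper subscripts `1, 2, 3` are encoded
as `1, 2, 0 : Fin 3`. -/
def zornRho {F B : Type*} [Field F] [AddCommGroup B] [Module F B]
    (j : Fin 3) (l : F) (X : F × B × B × F) : F × B × B × F :=
  if j = 1 then (l * X.1, l • X.2.1, l⁻¹ • X.2.2.1, l⁻¹ * X.2.2.2)
  else if j = 2 then (l * X.1, l⁻¹ • X.2.1, l • X.2.2.1, l⁻¹ * X.2.2.2)
  else ((l⁻¹ * l⁻¹) * X.1, X.2.1, X.2.2.1, (l * l) * X.2.2.2)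

/-! Each `ρ_j(λ)` acts diagonally on `[[α, x],[y, β]]` by the powers `λ ^ w_j` of an integer
weight vector `w_j ∈ ℤ⁴`, so the whole theorem becomes arithmetic of weights. The product
`XY` is compatible with such scalings as soon as ten linear equations hold, one per term of
the product formula; for `(w_j, w_{j+1}, w_{j+2})` they are checked by computation, which gives
triality. Diagonal scalings compose by multiplying the scalars and commute, and
`w₁ + w₂ + w₃ = 0` gives `ρ₁(λ)ρ₂(λ)ρ₃(λ) = Id`. -/

section ZornScale

variable {F B : Type*} [Field F] [AddCommGroup B] [Module F B]

def zornScale (l : F) (e : ℤ × ℤ × ℤ × ℤ) (X : F × B × B × F) : F × B × B × F :=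
  (l ^ e.1 * X.1, l ^ e.2.1 • X.2.1, l ^ e.2.2.1 • X.2.2.1, l ^ e.2.2.2 * X.2.2.2)

def zornRhoWeight : Fin 3 → ℤ × ℤ × ℤ × ℤ :=
  ![(-2, 0, 0, 2), (1, 1, -1, -1), (1, -1, 1, -1)]

theorem zornRho_eq_zornScale (j : Fin 3) (l : F) (X : F × B × B × F) :
    zornRho j l X = zornScale l (zornRhoWeight j) X := by
  fin_cases j <;> simp [zornRho, zornScale, zornRhoWeight, zpow_neg, zpow_ofNat, sq]

theorem zornScale_zornScale (μ ν : F) (e : ℤ × ℤ × ℤ × ℤ) (X : F × B × B × F) :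
    zornScale μ e (zornScale ν e X) = zornScale (μ * ν) e X := by
  simp only [zornScale, mul_zpow, mul_assoc, smul_smul]

theorem zornScale_comm (μ ν : F) (e e' : ℤ × ℤ × ℤ × ℤ) (X : F × B × B × F) :
    zornScale μ e (zornScale ν e' X) = zornScale ν e' (zornScale μ e X) := by
  simp only [zornScale, smul_smul, mul_assoc, mul_left_comm, mul_comm]

theorem zornScale_add {l : F} (hl : l ≠ 0) (e e' : ℤ × ℤ × ℤ × ℤ) (X : F × B × B × F) :
    zornScale l e (zornScale l e' X) = zornScale l (e + e') X := by
  simp only [zornScale, Prod.fst_add, Prod.snd_add, zpow_add₀ hl, mul_assoc, smul_smul]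

theorem zornScale_zero (l : F) (X : F × B × B × F) : zornScale l 0 X = X := by
  simp [zornScale]

theorem zornScale_one (e : ℤ × ℤ × ℤ × ℤ) (X : F × B × B × F) : zornScale 1 e X = X := by
  simp [zornScale]

structure IsZornMulWeight (e e' e'' : ℤ × ℤ × ℤ × ℤ) : Prop where
  fst_left : e'.2.2.2 + e''.2.2.2 = e.1
  fst_right : e'.2.2.1 + e''.2.1 = e.1
  x_left : e'.1 + e''.2.1 = e.2.1
  x_right : e'.2.1 + e''.2.2.2 = e.2.1
  x_mul : e'.2.2.1 + e''.2.2.1 = e.2.1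
  y_left : e'.2.2.1 + e''.1 = e.2.2.1
  y_right : e'.2.2.2 + e''.2.2.1 = e.2.2.1
  y_mul : e'.2.1 + e''.2.1 = e.2.2.1
  snd_left : e'.1 + e''.1 = e.2.2.2
  snd_right : e'.2.1 + e''.2.2.1 = e.2.2.2

theorem zornMul_zornScale (bmul : B →ₗ[F] B →ₗ[F] B) (form : B →ₗ[F] B →ₗ[F] F) (k : F)
    {l : F} (hl : l ≠ 0) {e e' e'' : ℤ × ℤ × ℤ × ℤ} (h : IsZornMulWeight e e' e'')
    (X Y : F × B × B × F) :
    zornMul bmul form k (zornScale l e' X) (zornScale l e'' Y) =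
      zornScale l e (zornMul bmul form k X Y) := by
  have w {p q r : ℤ} (h : p + q = r) : l ^ p * l ^ q = l ^ r := by rw [← zpow_add₀ hl, h]
  obtain ⟨α, x, y, β⟩ := X
  obtain ⟨α', x', y', β'⟩ := Y
  simp only [zornScale, zornMul, map_smul, LinearMap.smul_apply, smul_eq_mul, Prod.mk.injEq]
  refine ⟨?_, ?_, ?_, ?_⟩
  · linear_combination β * β' * w h.fst_left + form y x' * w h.fst_right
  · linear_combination (norm := module) w h.x_left • α • x' + w h.x_right • β' • x +
      w h.x_mul • k • bmul y y'
  · linear_combination (norm := module) w h.y_left • α' • y + w h.y_right • β • y' +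
      w h.y_mul • k • bmul x x'
  · linear_combination α * α' * w h.snd_left + form x y' * w h.snd_right

theorem isZornMulWeight_zornRhoWeight (j : Fin 3) :
    IsZornMulWeight (zornRhoWeight j) (zornRhoWeight (j + 1)) (zornRhoWeight (j + 2)) := by
  fin_cases j <;> constructor <;> decide

theorem zornRhoWeight_one_add_two_add_zero :
    zornRhoWeight 1 + zornRhoWeight 2 + zornRhoWeight 0 = 0 := by
  decide

end ZornScale

/-- Theorem 5.3 (i)–(iv).  The maps `ρ_j(λ)` satisfy the
global triality relation on the para-Zorn matrix algebra, are multiplicative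
in `λ`, commute with each other, and `ρ₁(λ)ρ₂(λ)ρ₃(λ) = Id`. -/
theorem zorn_rho_triality
    (F : Type*) [Field F]
    (B : Type*) [AddCommGroup B] [Module F B]
    (bmul : B →ₗ[F] B →ₗ[F] B) (form : B →ₗ[F] B →ₗ[F] F) (k : F) :
    -- (i) global triality relation
    (∀ (l : F), l ≠ 0 → ∀ (j : Fin 3) (X Y : F × B × B × F),
      zornRho j l (zornMul bmul form k X Y) =
        zornMul bmul form k (zornRho (j + 1) l X) (zornRho (j + 2) l Y)) ∧
    -- (ii) multiplicativity and unitality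
    (∀ (μ ν : F), μ ≠ 0 → ν ≠ 0 → ∀ (j : Fin 3) (X : F × B × B × F),
      zornRho j μ (zornRho j ν X) = zornRho j (μ * ν) X) ∧
    (∀ (j : Fin 3) (X : F × B × B × F), zornRho j (1 : F) X = X) ∧
    -- (iii) commutativity
    (∀ (μ ν : F), μ ≠ 0 → ν ≠ 0 → ∀ (j j' : Fin 3) (X : F × B × B × F),
      zornRho j μ (zornRho j' ν X) = zornRho j' ν (zornRho j μ X)) ∧
    -- (iv) ρ₁(λ)ρ₂(λ)ρ₃(λ) = Id
    (∀ (l : F), l ≠ 0 → ∀ X : F × B × B × F,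
      zornRho 1 l (zornRho 2 l (zornRho 0 l X)) = X) := by
  simp only [zornRho_eq_zornScale]
  refine ⟨fun l hl j X Y => ?_, fun μ ν _ _ j X => zornScale_zornScale μ ν _ X,
    fun j X => zornScale_one _ X, fun μ ν _ _ j j' X => zornScale_comm μ ν _ _ X, fun l hl X => ?_⟩
  · exact (zornMul_zornScale bmul form k hl (isZornMulWeight_zornRhoWeight j) X Y).symm
  · rw [zornScale_add hl, zornScale_add hl, zornRhoWeight_one_add_two_add_zero, zornScale_zero]
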